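/- arXiv:0911.1243 — 2 statements merged into one kernel-verified Lean document; each statement's English description precedes it below -/
import Mathlib

section
/- For p-permutation kG-modules M and N and a p-subgroup P of G, the canonical bilinear map induces an isomorphism of k N_G(P)/P-modules M[P] ⊗_k N[P] ≅ (M ⊗_k N)[P]. Consequently the Brauer quotient at P induces a ring homomorphism Br_P : pp_k(G) → pp_k(N_G(P)/P). -/
noncomputable section

open scoped TensorProduct

section Core

universe u v

variable {k : Type} [Field k] {G : Type} [Group G]

/-- A permutation representation: one admitting a basis permuted by the group action. -/
def IsPermutationRep {V : Type} [AddCommGroup V] [Module k V]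
    (ρ : Representation k G V) : Prop :=
  ∃ (ι : Type) (b : Module.Basis ι k V), ∀ (g : G) (i : ι), ∃ j : ι, ρ g (b i) = b j

/-- A `p`-permutation representation: its restriction to any Sylow `p`-subgroup is a
permutation representation. -/
def IsPPermutationRep (p : ℕ) {V : Type} [AddCommGroup V] [Module k V]
    (ρ : Representation k G V) : Prop :=
  ∀ S : Sylow p G, IsPermutationRep (ρ.comp (S : Subgroup G).subtype)

/-- Fixed points of a subgroup `P` on a representation. -/
def repFixed {V : Type} [AddCommGroup V] [Module k V]
    (ρ : Representation k G V) (P : Subgroup G) : Submodule k V :=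
  Representation.invariants (ρ.comp P.subtype)

/-- `T` is a transversal (set of coset representatives) of `Q` in `P`. -/
def IsTransversal (P Q : Subgroup G) (T : Finset G) : Prop :=
  (↑T : Set G) ⊆ (P : Set G) ∧ ∀ x ∈ P, ∃! g, g ∈ T ∧ g⁻¹ * x ∈ Q

/-- The set of relative traces `tr_Q^P x` of `Q`-fixed vectors `x`. -/
def traceElems {V : Type} [AddCommGroup V] [Module k V]
    (ρ : Representation k G V) (P Q : Subgroup G) : Set V :=
  {m | ∃ T : Finset G, IsTransversal P Q T ∧
    ∃ x ∈ repFixed ρ Q, m = ∑ g ∈ T, ρ g x}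

/-- The submodule `Σ_{Q < P} tr_Q^P M^Q` of `M`. -/
def brauerKer {V : Type} [AddCommGroup V] [Module k V]
    (ρ : Representation k G V) (P : Subgroup G) : Submodule k V :=
  ⨆ (Q : Subgroup G) (_ : Q < P), Submodule.span k (traceElems ρ P Q)

/-- `Σ_{Q < P} tr_Q^P M^Q`, seen inside `M^P`. -/
def brauerKerIn {V : Type} [AddCommGroup V] [Module k V]
    (ρ : Representation k G V) (P : Subgroup G) : Submodule k (repFixed ρ P) :=
  (brauerKer ρ P).comap (repFixed ρ P).subtype

/-- The Brauer quotient `M[P] = M^P / Σ_{Q<P} tr_Q^P M^Q`. -/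
abbrev BrauerQuotient {V : Type} [AddCommGroup V] [Module k V]
    (ρ : Representation k G V) (P : Subgroup G) : Type :=
  (repFixed ρ P) ⧸ (brauerKerIn ρ P)

/-- The image in the Brauer quotient of a `P`-fixed vector. -/
def brauerMk {V : Type} [AddCommGroup V] [Module k V]
    (ρ : Representation k G V) (P : Subgroup G) (v : V) (hv : v ∈ repFixed ρ P) :
    BrauerQuotient ρ P :=
  Submodule.Quotient.mk ⟨v, hv⟩

/-- Equivariant isomorphism of representations. -/
def EquivRep {V W : Type} [AddCommGroup V] [Module k V] [AddCommGroup W] [Module k W]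
    (ρV : Representation k G V) (ρW : Representation k G W) : Prop :=
  ∃ e : V ≃ₗ[k] W, ∀ (g : G) (v : V), e (ρV g v) = ρW g (e v)

/-- `V` is a direct summand of `W`, equivariantly. -/
def IsRepSummand {V W : Type} [AddCommGroup V] [Module k V] [AddCommGroup W] [Module k W]
    (ρV : Representation k G V) (ρW : Representation k G W) : Prop :=
  ∃ (i : V →ₗ[k] W) (π : W →ₗ[k] V),
    (∀ g v, i (ρV g v) = ρW g (i v)) ∧ (∀ g w, π (ρW g w) = ρV g (π w)) ∧
      ∀ v, π (i v) = v

/-- The direct sum (product) of two representations. -/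
def prodRep {V W : Type} [AddCommGroup V] [Module k V] [AddCommGroup W] [Module k W]
    (ρV : Representation k G V) (ρW : Representation k G W) :
    Representation k G (V × W) where
  toFun g := (ρV g).prodMap (ρW g)
  map_one' := by ext x <;> simp
  map_mul' g h := by ext x <;> simp

end Core
end

noncomputable section CoreBundled

/-- A bundled `kG`-module (representation of `G` over `k`). -/
structure RepOver (k G : Type) [Field k] [Group G] : Type 1 where
  V : Type
  [ab : AddCommGroup V]
  [mod : Module k V]
  ρ : Representation k G V

attribute [instance] RepOver.ab RepOver.mod

end CoreBundled

noncomputable section CorePP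

/-- The Weyl group `N_G(P)/P` of a subgroup. -/
abbrev WeylGroup {G : Type} [Group G] (P : Subgroup G) : Type :=
  ↥(Subgroup.normalizer (P : Set G)) ⧸ P.subgroupOf (Subgroup.normalizer (P : Set G))

/-- A bundled (finite-dimensional) `p`-permutation `kΓ`-module. -/
structure PPermClass (k Γ : Type) [Field k] [Group Γ] (p : ℕ) : Type 1 where
  V : Type
  [ab : AddCommGroup V]
  [mod : Module k V]
  [fin : FiniteDimensional k V]
  ρ : Representation k Γ V
  pperm : IsPPermutationRep p ρ

attribute [instance] PPermClass.ab PPermClass.mod PPermClass.fin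

/-- An interface for the `p`-permutation ring `pp_k(Γ)`: the Grothendieck ring of
`p`-permutation `kΓ`-modules with respect to direct sums, with multiplication induced
by the tensor product.  The field `univ` is the universal property of the Grothendieck
group, which pins `A` down uniquely. -/
structure PPermRing (k Γ : Type) [Field k] [Group Γ] (p : ℕ) : Type 2 where
  A : Type 1
  [ring : CommRing A]
  cls : PPermClass k Γ p → A
  cls_congr : ∀ M N, EquivRep M.ρ N.ρ → cls M = cls N
  cls_add : ∀ M N R, EquivRep R.ρ (prodRep M.ρ N.ρ) → cls R = cls M + cls N
  cls_mul : ∀ M N R, EquivRep R.ρ (M.ρ.tprod N.ρ) → cls R = cls M * cls N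
  cls_one : ∀ R, EquivRep R.ρ (Representation.trivial k (G := Γ) (V := k)) → cls R = 1
  span : AddSubgroup.closure (Set.range cls) = ⊤
  univ : ∀ (B : Type 1) [AddCommGroup B] (f : PPermClass k Γ p → B),
      (∀ M N R, EquivRep R.ρ (prodRep M.ρ N.ρ) → f R = f M + f N) →
      ∃! φ : A →+ B, ∀ M, φ (cls M) = f M

attribute [instance] PPermRing.ring

end CorePP

open scoped TensorProduct
/- ===================== Auxiliary development ===================== -/
namespace BrauerAux

open Submodule

variable {k : Type} [Field k] {G : Type} [Group G]
variable {V : Type} [AddCommGroup V] [Module k V]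
variable {W : Type} [AddCommGroup W] [Module k W]

lemma mem_repFixed {ρ : Representation k G V} {P : Subgroup G} {v : V} :
    v ∈ repFixed ρ P ↔ ∀ g : ↥P, ρ (g : G) v = v := Iff.rfl

lemma brauerMk_congr (ρ : Representation k G V) (P : Subgroup G) {v w : V}
    (hv : v ∈ repFixed ρ P) (hw : w ∈ repFixed ρ P) (h : v = w) :
    brauerMk ρ P v hv = brauerMk ρ P w hw := by subst h; rfl

lemma span_traceElems_le (ρ : Representation k G V) {P Q : Subgroup G} (hQ : Q < P) :
    Submodule.span k (traceElems ρ P Q) ≤ brauerKer ρ P :=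
  le_iSup₂ (f := fun (Q : Subgroup G) (_ : Q < P) => Submodule.span k (traceElems ρ P Q)) Q hQ

/-- Generic pushing lemma for the Brauer kernel along a `P`-equivariant map. -/
lemma brauerKer_le_comap {ρ : Representation k G V} {ρ' : Representation k G W}
    {P : Subgroup G} (L : V →ₗ[k] W)
    (hL : ∀ g ∈ P, ∀ x, L (ρ g x) = ρ' g (L x))
    (hF : ∀ Q : Subgroup G, Q < P → ∀ x ∈ repFixed ρ Q, L x ∈ repFixed ρ' Q) :
    brauerKer ρ P ≤ (brauerKer ρ' P).comap L := by
  refine iSup₂_le fun Q hQ => Submodule.span_le.2 ?_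
  rintro m ⟨T, hT, x, hx, rfl⟩
  refine Submodule.mem_comap.2 (span_traceElems_le ρ' hQ (Submodule.subset_span ?_))
  refine ⟨T, hT, L x, hF Q hQ x hx, ?_⟩
  rw [map_sum]
  exact Finset.sum_congr rfl fun g hg => hL g (hT.1 hg) x

lemma mem_brauerKer_map {ρ : Representation k G V} {ρ' : Representation k G W}
    {P : Subgroup G} (L : V →ₗ[k] W)
    (hL : ∀ g ∈ P, ∀ x, L (ρ g x) = ρ' g (L x))
    (hF : ∀ Q : Subgroup G, Q < P → ∀ x ∈ repFixed ρ Q, L x ∈ repFixed ρ' Q)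
    {v : V} (hv : v ∈ brauerKer ρ P) : L v ∈ brauerKer ρ' P :=
  brauerKer_le_comap L hL hF hv

/-- Cardinality of a transversal of a proper subgroup of a `p`-group is divisible by `p`. -/
lemma dvd_card_transversal [Finite G] {P Q : Subgroup G} (hQ : Q < P)
    {T : Finset G} (hT : IsTransversal P Q T) {p : ℕ} [Fact p.Prime]
    (hP : IsPGroup p ↥P) : p ∣ T.card := by
  classical
  have hle : Q ≤ P := hQ.le
  -- bijection between T and the coset space
  have e : {x // x ∈ T} ≃ (↥P ⧸ Q.subgroupOf P) := by
    refine Equiv.ofBijective (fun t => QuotientGroup.mk ⟨t.1, hT.1 t.2⟩) ⟨?_, ?_⟩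
    · rintro ⟨t₁, h₁⟩ ⟨t₂, h₂⟩ h
      have h' : (⟨t₁, hT.1 h₁⟩ : ↥P)⁻¹ * ⟨t₂, hT.1 h₂⟩ ∈ Q.subgroupOf P :=
        (QuotientGroup.eq (s := Q.subgroupOf P)).1 h
      have hQm : t₁⁻¹ * t₂ ∈ Q := h'
      obtain ⟨g, hg, hgu⟩ := hT.2 t₂ (hT.1 h₂)
      have e1 : t₁ = g := hgu t₁ ⟨h₁, hQm⟩
      have e2 : t₂ = g := hgu t₂ ⟨h₂, by simpa using Q.one_mem⟩
      exact Subtype.ext (e1.trans e2.symm)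
    · rintro x
      refine Quotient.inductionOn' x fun x => ?_
      obtain ⟨g, ⟨hgT, hgQ⟩, _⟩ := hT.2 x.1 x.2
      exact ⟨⟨g, hgT⟩, (QuotientGroup.eq (s := Q.subgroupOf P)).2 hgQ⟩
  have hcard : T.card = (Q.subgroupOf P).index := by
    have : Nat.card {x // x ∈ T} = Nat.card (↥P ⧸ Q.subgroupOf P) := Nat.card_congr e
    simpa [Subgroup.index, Nat.card_eq_finsetCard] using this
  obtain ⟨m, hm⟩ := hP.exists_card_eq
  have hne : (Q.subgroupOf P).index ≠ 1 := by
    intro h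
    have : P ≤ Q := Subgroup.subgroupOf_eq_top.1 (Subgroup.index_eq_one.1 h)
    exact hQ.not_ge this
  have hdvd : (Q.subgroupOf P).index ∣ p ^ m := hm ▸ Subgroup.index_dvd_card _
  obtain ⟨j, hj, hje⟩ := (Nat.dvd_prime_pow (Fact.out : p.Prime)).1 hdvd
  rw [hcard, hje]
  rcases Nat.eq_zero_or_pos j with h0 | h0
  · subst h0; simp at hje; exact absurd hje hQ.not_ge
  · exact dvd_pow_self p h0.ne'


/- ===== normalizer action on the Brauer quotient ===== -/

lemma repFixed_normalizer {ρ : Representation k G V} {P : Subgroup G} {v : V}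
    (hv : v ∈ repFixed ρ P) {n : G} (hn : n ∈ (Subgroup.normalizer (P : Set G))) :
    ρ n v ∈ repFixed ρ P := by
  refine mem_repFixed.2 fun g => ?_
  have hg' : n⁻¹ * ↑g * n ∈ P := by
    have := Subgroup.mem_normalizer_iff.1 ((Subgroup.normalizer (P : Set G)).inv_mem hn) (↑g)
    simpa using this.1 g.2
  calc ρ ↑g (ρ n v) = ρ (↑g * n) v := by rw [map_mul]; rfl
    _ = ρ (n * (n⁻¹ * ↑g * n)) v := by group
    _ = ρ n (ρ (n⁻¹ * ↑g * n) v) := by rw [map_mul]; rfl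
    _ = ρ n v := by rw [mem_repFixed.1 hv ⟨_, hg'⟩]

lemma brauerKer_normalizer {ρ : Representation k G V} {P : Subgroup G}
    {n : G} (hn : n ∈ (Subgroup.normalizer (P : Set G))) {v : V} (hv : v ∈ brauerKer ρ P) :
    ρ n v ∈ brauerKer ρ P := by
  classical
  have key : brauerKer ρ P ≤ (brauerKer ρ P).comap (ρ n) := by
    refine iSup₂_le fun Q hQ => Submodule.span_le.2 ?_
    rintro m ⟨T, hT, x, hx, rfl⟩
    set f : G → G := fun g => n * g * n⁻¹ with hf
    have hfinj : Function.Injective f := fun a b hab =>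
      mul_left_cancel (mul_right_cancel hab)
    set Q' : Subgroup G := Q.map ((MulAut.conj n) : G ≃* G).toMonoidHom with hQ'
    have memQ' : ∀ y, y ∈ Q' ↔ ∃ q ∈ Q, n * q * n⁻¹ = y := by
      intro y
      simp [hQ', Subgroup.mem_map, MulAut.conj_apply, mul_assoc]
    have hQ'P : Q' < P := by
      constructor
      · rintro y hy
        obtain ⟨q, hq, rfl⟩ := (memQ' y).1 hy
        exact (Subgroup.mem_normalizer_iff.1 hn q).1 (hQ.le hq)
      · intro hPQ'
        obtain ⟨g₀, hg₀P, hg₀Q⟩ := SetLike.exists_of_lt hQ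
        have : n * g₀ * n⁻¹ ∈ Q' := hPQ' ((Subgroup.mem_normalizer_iff.1 hn g₀).1 hg₀P)
        obtain ⟨q, hq, hqe⟩ := (memQ' _).1 this
        exact hg₀Q (hfinj hqe ▸ hq)
    have hmemP : ∀ y ∈ P, n⁻¹ * y * n ∈ P := by
      intro y hy
      have := Subgroup.mem_normalizer_iff.1 ((Subgroup.normalizer (P : Set G)).inv_mem hn) y
      simpa using this.1 hy
    have hT' : IsTransversal P Q' (T.image f) := by
      constructor
      · intro y hy
        obtain ⟨t, ht, rfl⟩ := Finset.mem_image.1 (by exact_mod_cast hy)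
        exact (Subgroup.mem_normalizer_iff.1 hn t).1 (hT.1 ht)
      · intro x hxP
        obtain ⟨g, ⟨hgT, hgQ⟩, hguniq⟩ := hT.2 (n⁻¹ * x * n) (hmemP x hxP)
        refine ⟨f g, ⟨Finset.mem_image_of_mem f hgT, ?_⟩, ?_⟩
        · refine (memQ' _).2 ⟨g⁻¹ * (n⁻¹ * x * n), hgQ, ?_⟩
          simp only [hf]; group
        · rintro s ⟨hsT', hsQ'⟩
          obtain ⟨t, htT, rfl⟩ := Finset.mem_image.1 hsT'
          obtain ⟨q, hq, hqe⟩ := (memQ' _).1 hsQ'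
          have hqval : q = t⁻¹ * (n⁻¹ * x * n) := by
            have h1 : n⁻¹ * (n * q * n⁻¹) * n = n⁻¹ * ((f t)⁻¹ * x) * n := by rw [hqe]
            calc q = n⁻¹ * (n * q * n⁻¹) * n := by group
              _ = n⁻¹ * ((f t)⁻¹ * x) * n := h1
              _ = t⁻¹ * (n⁻¹ * x * n) := by simp only [hf]; group
          have : t = g := hguniq t ⟨htT, by rw [← hqval]; exact hq⟩
          rw [this]
    have hfix : ρ n x ∈ repFixed ρ Q' := by
      refine mem_repFixed.2 fun q' => ?_
      obtain ⟨q, hq, hqe⟩ := (memQ' ↑q').1 q'.2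
      have hx' : ρ q x = x := mem_repFixed.1 hx ⟨q, hq⟩
      calc ρ ↑q' (ρ n x) = ρ (↑q' * n) x := by rw [map_mul]; rfl
        _ = ρ (n * q) x := by rw [← hqe]; congr 1; group
        _ = ρ n (ρ q x) := by rw [map_mul]; rfl
        _ = ρ n x := by rw [hx']
    refine Submodule.mem_comap.2 (span_traceElems_le ρ hQ'P (Submodule.subset_span
      ⟨T.image f, hT', ρ n x, hfix, ?_⟩))
    rw [map_sum, Finset.sum_image (fun a _ b _ h => hfinj h)]
    refine Finset.sum_congr rfl fun g hg => ?_
    calc ρ n (ρ g x) = ρ (n * g) x := by rw [map_mul]; rfl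
      _ = ρ (f g * n) x := by congr 1; simp only [hf]; group
      _ = ρ (f g) (ρ n x) := by rw [map_mul]; rfl
  exact key hv

noncomputable def brauerEnd (ρ : Representation k G V) (P : Subgroup G) (n : ↥(Subgroup.normalizer (P : Set G))) :
    BrauerQuotient ρ P →ₗ[k] BrauerQuotient ρ P :=
  Submodule.mapQ (brauerKerIn ρ P) (brauerKerIn ρ P)
    ((ρ ↑n).restrict fun _ hv => repFixed_normalizer hv n.2)
    (by rintro ⟨v, hv⟩ hvk; exact brauerKer_normalizer n.2 hvk)

lemma brauerEnd_mk (ρ : Representation k G V) (P : Subgroup G) (n : ↥(Subgroup.normalizer (P : Set G)))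
    (v : V) (hv : v ∈ repFixed ρ P) :
    brauerEnd ρ P n (brauerMk ρ P v hv) =
      brauerMk ρ P (ρ ↑n v) (repFixed_normalizer hv n.2) := by
  rfl

lemma brauer_hom_ext {ρ : Representation k G V} {P : Subgroup G}
    {M : Type} [AddCommGroup M] [Module k M] {f g : BrauerQuotient ρ P →ₗ[k] M}
    (h : ∀ v (hv : v ∈ repFixed ρ P),
      f (brauerMk ρ P v hv) = g (brauerMk ρ P v hv)) : f = g :=
  LinearMap.ext fun x => by
    obtain ⟨⟨v, hv⟩, rfl⟩ := Submodule.Quotient.mk_surjective _ x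
    exact h v hv

noncomputable def weylRepAux (ρ : Representation k G V) (P : Subgroup G) :
    ↥(Subgroup.normalizer (P : Set G)) →* Module.End k (BrauerQuotient ρ P) where
  toFun := brauerEnd ρ P
  map_one' := brauer_hom_ext fun v hv => by
    rw [brauerEnd_mk]
    exact brauerMk_congr ρ P _ hv (by simp)
  map_mul' m n := brauer_hom_ext fun v hv => by
    show brauerEnd ρ P (m * n) (brauerMk ρ P v hv) =
      brauerEnd ρ P m (brauerEnd ρ P n (brauerMk ρ P v hv))
    rw [brauerEnd_mk, brauerEnd_mk, brauerEnd_mk]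
    refine brauerMk_congr ρ P _ _ ?_
    rw [show ((↑(m * n) : G)) = ↑m * ↑n from rfl, map_mul]; rfl

noncomputable def weylRep (ρ : Representation k G V) (P : Subgroup G) :
    Representation k (WeylGroup P) (BrauerQuotient ρ P) :=
  QuotientGroup.lift (P.subgroupOf (Subgroup.normalizer (P : Set G))) (weylRepAux ρ P) (by
    intro u hu
    have hu' : (↑u : G) ∈ P := hu
    show brauerEnd ρ P u = 1
    refine brauer_hom_ext fun v hv => ?_
    rw [brauerEnd_mk]
    show _ = brauerMk ρ P v hv
    exact brauerMk_congr ρ P _ hv (mem_repFixed.1 hv ⟨↑u, hu'⟩))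

lemma weylRep_mk (ρ : Representation k G V) (P : Subgroup G) (n : ↥(Subgroup.normalizer (P : Set G)))
    (v : V) (hv : v ∈ repFixed ρ P) :
    weylRep ρ P (QuotientGroup.mk n) (brauerMk ρ P v hv) =
      brauerMk ρ P (ρ ↑n v) (repFixed_normalizer hv n.2) := by
  show brauerEnd ρ P n (brauerMk ρ P v hv) = _
  rw [brauerEnd_mk]


/- ===== permutation bases ===== -/

section PermBasis

variable {ρ : Representation k G V} {P : Subgroup G}
variable {ι : Type} (b : Module.Basis ι k V) (a : ↥P → ι → ι)

section ActionLemmas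

variable (hab : ∀ (g : ↥P) i, ρ (g : G) (b i) = b (a g i))

include hab

lemma a_one (i : ι) : a 1 i = i :=
  b.injective (by rw [← hab]; simp)

lemma a_mul (g h : ↥P) (i : ι) : a (g * h) i = a g (a h i) := by
  refine b.injective ?_
  rw [← hab, ← hab, ← hab]
  rw [show ((↑(g * h) : G)) = ↑g * ↑h from rfl, map_mul]
  rfl

lemma a_inv_cancel (g : ↥P) (i : ι) : a g⁻¹ (a g i) = i := by
  rw [← a_mul b a hab, inv_mul_cancel, a_one b a hab]

lemma a_inv_cancel' (g : ↥P) (i : ι) : a g (a g⁻¹ i) = i := by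
  rw [← a_mul b a hab, mul_inv_cancel, a_one b a hab]

lemma a_injective (g : ↥P) : Function.Injective (a g) := fun i j h => by
  have := congrArg (a g⁻¹) h
  rwa [a_inv_cancel b a hab, a_inv_cancel b a hab] at this

lemma repr_rho (g : ↥P) (v : V) :
    b.repr (ρ (g : G) v) = Finsupp.mapDomain (a g) (b.repr v) := by
  have : (b.repr.toLinearMap ∘ₗ ρ (g : G)) =
      (Finsupp.lmapDomain k k (a g) ∘ₗ b.repr.toLinearMap) := by
    refine b.ext fun i => ?_
    simp only [LinearMap.coe_comp, LinearEquiv.coe_coe, Function.comp_apply,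
      Finsupp.lmapDomain_apply]
    rw [hab g i, Module.Basis.repr_self, Module.Basis.repr_self, Finsupp.mapDomain_single]
  exact LinearMap.congr_fun this v

lemma repr_fixed {v : V} (hv : v ∈ repFixed ρ P) (g : ↥P) (i : ι) :
    b.repr v (a g i) = b.repr v i := by
  have h1 : b.repr v = Finsupp.mapDomain (a g) (b.repr v) := by
    conv_lhs => rw [← mem_repFixed.1 hv g]
    exact repr_rho b a hab g v
  conv_lhs => rw [h1]
  exact Finsupp.mapDomain_apply (a_injective b a hab g) _ _

lemma bFixed_mem {i : ι} (hi : ∀ g, a g i = i) : b i ∈ repFixed ρ P :=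
  mem_repFixed.2 fun g => by rw [hab, hi g]

lemma coord_eq_zero_of_mem_brauerKer [Finite G] {p : ℕ} [Fact p.Prime] [CharP k p]
    (hP : IsPGroup p ↥P) (i : ι) (hi : ∀ g, a g i = i)
    {m : V} (hm : m ∈ brauerKer ρ P) : b.repr m i = 0 := by
  classical
  have key : brauerKer ρ P ≤ LinearMap.ker (b.coord i) := by
    refine iSup₂_le fun Q hQ => Submodule.span_le.2 ?_
    rintro m ⟨T, hT, x, hx, rfl⟩
    have hterm : ∀ g ∈ T, b.repr (ρ g x) i = b.repr x i := by
      intro g hg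
      have hgP : g ∈ P := hT.1 hg
      have : b.repr (ρ (( ⟨g, hgP⟩ : ↥P) : G) x) i
          = Finsupp.mapDomain (a ⟨g, hgP⟩) (b.repr x) i := by
        rw [repr_rho b a hab]
      rw [show ρ g x = ρ ((⟨g, hgP⟩ : ↥P) : G) x from rfl, this]
      conv_lhs => rw [← hi ⟨g, hgP⟩]
      exact Finsupp.mapDomain_apply (a_injective b a hab _) _ _
    have : b.repr (∑ g ∈ T, ρ g x) i = (T.card : k) * b.repr x i := by
      rw [map_sum]
      rw [Finsupp.finset_sum_apply]
      rw [Finset.sum_congr rfl hterm, Finset.sum_const, nsmul_eq_mul]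
    have hz : ((T.card : ℕ) : k) = 0 :=
      (CharP.cast_eq_zero_iff k p T.card).2 (dvd_card_transversal hQ hT hP)
    simp only [SetLike.mem_coe, LinearMap.mem_ker, Module.Basis.coord_apply]
    rw [this, hz, zero_mul]
  exact key hm

lemma orbitSum_mem_brauerKer [DecidableEq ι] [Fintype ↥P] (i₀ : ι) (g₀ : ↥P) (hg₀ : a g₀ i₀ ≠ i₀) :
    (∑ j ∈ Finset.image (fun g : ↥P => a g i₀) Finset.univ, b j) ∈ brauerKer ρ P := by
  classical
  set O : Finset ι := Finset.image (fun g : ↥P => a g i₀) Finset.univ with hO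
  set St : Subgroup ↥P :=
    { carrier := {g | a g i₀ = i₀}
      one_mem' := a_one b a hab i₀
      mul_mem' := fun {x y} hx hy => by
        show a (x * y) i₀ = i₀
        rw [a_mul b a hab, hy, hx]
      inv_mem' := fun {x} hx => by
        show a x⁻¹ i₀ = i₀
        conv_lhs => rw [← hx]
        exact a_inv_cancel b a hab x i₀ } with hSt
  set Q : Subgroup G := St.map P.subtype with hQdef
  have mem_Q : ∀ y, y ∈ Q ↔ ∃ g : ↥P, a g i₀ = i₀ ∧ (g : G) = y := by
    intro y
    simp only [hQdef, Subgroup.mem_map]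
    constructor
    · rintro ⟨g, hg, rfl⟩; exact ⟨g, hg, rfl⟩
    · rintro ⟨g, hg, rfl⟩; exact ⟨g, hg, rfl⟩
  have hQP : Q < P := by
    rw [SetLike.lt_iff_le_and_exists]
    refine ⟨Subgroup.map_subtype_le St, ↑g₀, g₀.2, fun hmem => ?_⟩
    obtain ⟨g, hg, hge⟩ := (mem_Q _).1 hmem
    exact hg₀ (by rw [← Subtype.ext hge]; exact hg)
  have hrep : ∀ j : {j // j ∈ O}, ∃ g : ↥P, a g i₀ = j.1 := by
    rintro ⟨j, hj⟩
    obtain ⟨g, _, hg⟩ := Finset.mem_image.1 hj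
    exact ⟨g, hg⟩
  choose gg hgg using hrep
  have gginj : ∀ j j' : {j // j ∈ O}, (gg j : G) = (gg j' : G) → j = j' := by
    intro j j' h
    have : gg j = gg j' := Subtype.ext h
    exact Subtype.ext (by rw [← hgg j, ← hgg j', this])
  set T : Finset G := Finset.image (fun j => ((gg j : ↥P) : G)) O.attach with hTdef
  have hT : IsTransversal P Q T := by
    constructor
    · intro y hy
      obtain ⟨j, _, rfl⟩ := Finset.mem_image.1 (by exact_mod_cast hy)
      exact (gg j).2
    · intro x hx
      set x' : ↥P := ⟨x, hx⟩ with hx'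
      have hjO : a x' i₀ ∈ O := Finset.mem_image_of_mem _ (Finset.mem_univ x')
      set j : {j // j ∈ O} := ⟨a x' i₀, hjO⟩ with hj
      refine ⟨↑(gg j), ⟨Finset.mem_image_of_mem _ (Finset.mem_attach _ j), ?_⟩, ?_⟩
      · refine (mem_Q _).2 ⟨(gg j)⁻¹ * x', ?_, rfl⟩
        have hgj : a (gg j) i₀ = a x' i₀ := hgg j
        rw [a_mul b a hab, ← hgj]
        exact a_inv_cancel b a hab _ _
      · rintro s ⟨hsT, hsQ⟩
        obtain ⟨j', _, rfl⟩ := Finset.mem_image.1 hsT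
        obtain ⟨h, hh, hhe⟩ := (mem_Q _).1 hsQ
        have hhval : h = (gg j')⁻¹ * x' := Subtype.ext (by
          rw [hhe]; rfl)
        have : a x' i₀ = j'.1 := by
          have h1 : a ((gg j')⁻¹ * x') i₀ = i₀ := by rw [← hhval]; exact hh
          rw [a_mul b a hab] at h1
          have h2 := congrArg (a (gg j')) h1
          rw [a_inv_cancel' b a hab] at h2
          rw [h2, hgg j']
        have hjj : j' = j := Subtype.ext this.symm
        rw [hjj]
  have hfix : b i₀ ∈ repFixed ρ Q := by
    refine mem_repFixed.2 fun q => ?_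
    obtain ⟨g, hg, hge⟩ := (mem_Q ↑q).1 q.2
    rw [show (↑q : G) = ↑g from hge.symm, hab, hg]
  have htr : ∑ g ∈ T, ρ g (b i₀) = ∑ j ∈ O, b j := by
    rw [hTdef, Finset.sum_image (fun j _ j' _ h => gginj j j' h)]
    rw [show ∑ j ∈ O, b j = ∑ j ∈ O.attach, b j.1 from (Finset.sum_attach O _).symm]
    refine Finset.sum_congr rfl fun j _ => ?_
    rw [hab, hgg j]
  exact span_traceElems_le ρ hQP (Submodule.subset_span ⟨T, hT, b i₀, hfix, htr.symm⟩)

lemma fixed_decomp [Finite G] {v : V} (hv : v ∈ repFixed ρ P) :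
    v ∈ Submodule.span k (Set.range fun i : {i : ι // ∀ g, a g i = i} => b i.1)
      ⊔ brauerKer ρ P := by
  classical
  haveI : Fintype ↥P := Fintype.ofFinite _
  set σ : Submodule k V :=
    Submodule.span k (Set.range fun i : {i : ι // ∀ g, a g i = i} => b i.1)
      ⊔ brauerKer ρ P with hσ
  -- strong induction on the support
  suffices H : ∀ n : ℕ, ∀ v : V, v ∈ repFixed ρ P → (b.repr v).support.card = n → v ∈ σ by
    exact H _ v hv rfl
  intro n
  induction n using Nat.strong_induction_on with
  | _ n IH =>
    intro v hv hn
    by_cases hall : ∀ i ∈ (b.repr v).support, ∀ g : ↥P, a g i = i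
    · have hvsum : v = ∑ i ∈ (b.repr v).support, b.repr v i • b i := by
        conv_lhs => rw [← b.linearCombination_repr v]
        rfl
      rw [hvsum]
      refine Submodule.mem_sup_left (Submodule.sum_mem _ fun i hi => ?_)
      exact Submodule.smul_mem _ _ (Submodule.subset_span ⟨⟨i, hall i hi⟩, rfl⟩)
    · push_neg at hall
      obtain ⟨i₀, hi₀, g₀, hg₀⟩ := hall
      set O : Finset ι := Finset.image (fun g : ↥P => a g i₀) Finset.univ with hO
      set w : V := ∑ j ∈ O, b j with hw
      set c : k := b.repr v i₀ with hc
      have hwker : w ∈ brauerKer ρ P := orbitSum_mem_brauerKer b a hab i₀ g₀ hg₀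
      have hconst : ∀ j ∈ O, b.repr v j = c := by
        intro j hj
        obtain ⟨g, _, rfl⟩ := Finset.mem_image.1 hj
        exact repr_fixed b a hab hv g i₀
      have himg : ∀ g : ↥P, O.image (a g) = O := by
        intro g
        refine Finset.eq_of_subset_of_card_le ?_ ?_
        · intro y hy
          obtain ⟨j, hj, rfl⟩ := Finset.mem_image.1 hy
          obtain ⟨h, _, rfl⟩ := Finset.mem_image.1 hj
          rw [← a_mul b a hab]
          exact Finset.mem_image_of_mem _ (Finset.mem_univ _)
        · rw [Finset.card_image_of_injective _ (a_injective b a hab g)]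
      have hwfix : w ∈ repFixed ρ P := by
        refine mem_repFixed.2 fun g => ?_
        rw [hw, map_sum]
        calc ∑ j ∈ O, ρ (↑g) (b j) = ∑ j ∈ O, b (a g j) := by
              exact Finset.sum_congr rfl fun j _ => hab g j
          _ = ∑ j ∈ O.image (a g), b j :=
              (Finset.sum_image (fun x _ y _ h => a_injective b a hab g h)).symm
          _ = ∑ j ∈ O, b j := by rw [himg g]
      have hwj : ∀ j', b.repr w j' = if j' ∈ O then 1 else 0 := by
        intro j'
        rw [hw, map_sum, Finsupp.finset_sum_apply]
        simp [Module.Basis.repr_self, Finsupp.single_apply, Finset.sum_ite_eq]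
      set v' : V := v - c • w with hv'def
      have hv' : v' ∈ repFixed ρ P :=
        sub_mem hv (Submodule.smul_mem _ _ hwfix)
      have hv'j : ∀ j, b.repr v' j = b.repr v j - c * (if j ∈ O then 1 else 0) := by
        intro j
        rw [hv'def, map_sub, map_smul, Finsupp.sub_apply, Finsupp.smul_apply, hwj j,
          smul_eq_mul]
      have hsupp : (b.repr v').support ⊆ (b.repr v).support \ O := by
        intro j hj
        have hjne : b.repr v' j ≠ 0 := Finsupp.mem_support_iff.1 hj
        rw [hv'j] at hjne
        by_cases hjO : j ∈ O
        · exact absurd (by rw [hconst j hjO]; simp [hjO]) hjne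
        · simp only [hjO, if_false, mul_zero, sub_zero] at hjne
          exact Finset.mem_sdiff.2 ⟨Finsupp.mem_support_iff.2 hjne, hjO⟩
      have hi₀O : i₀ ∈ O := by
        rw [hO]
        refine Finset.mem_image.2 ⟨1, Finset.mem_univ _, a_one b a hab i₀⟩
      have hlt : (b.repr v').support.card < n := by
        rw [← hn]
        refine Finset.card_lt_card ?_
        constructor
        · exact hsupp.trans (Finset.sdiff_subset)
        · intro hsub
          have : i₀ ∈ (b.repr v').support := hsub hi₀
          exact (Finset.mem_sdiff.1 (hsupp this)).2 hi₀O
      have hv'mem : v' ∈ σ := IH _ hlt v' hv' rfl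
      have hvv : v = v' + c • w := by rw [hv'def]; abel
      rw [hvv]
      exact add_mem hv'mem (Submodule.mem_sup_right (Submodule.smul_mem _ _ hwker))

/-- The index set of `P`-fixed basis vectors. -/
noncomputable def brauerFam : {i : ι // ∀ g : ↥P, a g i = i} → BrauerQuotient ρ P :=
  fun i => brauerMk ρ P (b i.1) (bFixed_mem b a hab i.2)

lemma span_bF_le_repFixed :
    Submodule.span k (Set.range fun i : {i : ι // ∀ g : ↥P, a g i = i} => b i.1)
      ≤ repFixed ρ P :=
  Submodule.span_le.2 (by rintro _ ⟨i, rfl⟩; exact bFixed_mem b a hab i.2)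

/-- The images of the `P`-fixed basis vectors form a basis of the Brauer quotient. -/
noncomputable def brauerBasis [Finite G] {p : ℕ} [Fact p.Prime] [CharP k p]
    (hP : IsPGroup p ↥P) :
    Module.Basis {i : ι // ∀ g : ↥P, a g i = i} k (BrauerQuotient ρ P) := by
  classical
  refine Module.Basis.mk (v := brauerFam b a hab) ?_ ?_
  · -- linear independence
    rw [linearIndependent_iff]
    intro l hl
    set s : V := ∑ j ∈ l.support, l j • b j.1 with hs
    have hsfix : s ∈ repFixed ρ P :=
      Submodule.sum_mem _ fun j _ =>
        Submodule.smul_mem _ _ (bFixed_mem b a hab j.2)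
    have htot : Finsupp.linearCombination k (brauerFam b a hab) l =
        Submodule.Quotient.mk (⟨s, hsfix⟩ : repFixed ρ P) := by
      rw [Finsupp.linearCombination_apply, Finsupp.sum]
      rw [show Submodule.Quotient.mk (⟨s, hsfix⟩ : repFixed ρ P)
          = (brauerKerIn ρ P).mkQ ⟨s, hsfix⟩ from rfl]
      rw [show (⟨s, hsfix⟩ : repFixed ρ P)
          = ∑ j ∈ l.support, l j • ⟨b j.1, bFixed_mem b a hab j.2⟩ by
        apply Subtype.ext
        push_cast [hs]
        rfl]
      rw [map_sum]
      exact Finset.sum_congr rfl fun j _ => by rw [map_smul]; rfl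
    rw [htot] at hl
    have hker : s ∈ brauerKer ρ P := by
      have := (Submodule.Quotient.mk_eq_zero _).1 hl
      exact this
    have hcoord : ∀ i : {i : ι // ∀ g : ↥P, a g i = i}, b.repr s i.1 = l i := by
      intro i
      rw [hs, map_sum, Finsupp.finset_sum_apply]
      have : ∀ j ∈ l.support,
          (b.repr (l j • b j.1)) i.1 = if j = i then l j else 0 := by
        intro j _
        rw [map_smul, Finsupp.smul_apply, Module.Basis.repr_self, Finsupp.single_apply,
          smul_eq_mul]
        by_cases h : j = i
        · simp [h]
        · have : ¬ (j.1 = i.1) := fun hc => h (Subtype.ext hc)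
          simp [h, this]
      rw [Finset.sum_congr rfl this, Finset.sum_ite_eq' l.support i (fun j => l j)]
      by_cases h : i ∈ l.support
      · simp [h]
      · simp [h, Finsupp.notMem_support_iff.1 h]
    ext i
    rw [← hcoord i]
    exact coord_eq_zero_of_mem_brauerKer b a hab hP i.1 i.2 hker
  · -- spanning
    rintro ξ -
    obtain ⟨⟨v, hv⟩, rfl⟩ := Submodule.Quotient.mk_surjective _ ξ
    have hdec := fixed_decomp b a hab hv
    rw [Submodule.mem_sup] at hdec
    obtain ⟨s, hs, u, hu, hsum⟩ := hdec
    have hsfix : s ∈ repFixed ρ P := span_bF_le_repFixed b a hab hs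
    have heq : (Submodule.Quotient.mk (⟨v, hv⟩ : repFixed ρ P) : BrauerQuotient ρ P)
        = Submodule.Quotient.mk ⟨s, hsfix⟩ := by
      rw [Submodule.Quotient.eq]
      show ((⟨v, hv⟩ : repFixed ρ P) - ⟨s, hsfix⟩) ∈ brauerKerIn ρ P
      have hvs : v - s = u := by rw [← hsum]; abel
      show (repFixed ρ P).subtype ((⟨v, hv⟩ : repFixed ρ P) - ⟨s, hsfix⟩) ∈ brauerKer ρ P
      rw [map_sub]
      show v - s ∈ brauerKer ρ P
      rw [hvs]; exact hu
    rw [heq]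
    set bF' : {i : ι // ∀ g : ↥P, a g i = i} → repFixed ρ P :=
      fun i => ⟨b i.1, bFixed_mem b a hab i.2⟩ with hbF'
    have hsmem : s ∈ Submodule.map (repFixed ρ P).subtype
        (Submodule.span k (Set.range bF')) := by
      rw [Submodule.map_span]
      have him : (repFixed ρ P).subtype '' Set.range bF'
          = Set.range fun i : {i : ι // ∀ g : ↥P, a g i = i} => b i.1 := by
        rw [← Set.range_comp]; rfl
      rw [him]; exact hs
    obtain ⟨y, hy, hyv⟩ := hsmem
    have hyval : y = ⟨s, hsfix⟩ := Subtype.ext hyv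
    rw [← hyval]
    have hmk : (Submodule.Quotient.mk y : BrauerQuotient ρ P)
        = (brauerKerIn ρ P).mkQ y := rfl
    rw [hmk]
    have : (brauerKerIn ρ P).mkQ y ∈ Submodule.map (brauerKerIn ρ P).mkQ
        (Submodule.span k (Set.range bF')) := Submodule.mem_map_of_mem hy
    rw [Submodule.map_span] at this
    have him2 : (brauerKerIn ρ P).mkQ '' Set.range bF'
        = Set.range (brauerFam b a hab) := by
      rw [← Set.range_comp]; rfl
    rwa [him2] at this

lemma brauerBasis_apply [Finite G] {p : ℕ} [Fact p.Prime] [CharP k p]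
    (hP : IsPGroup p ↥P) (i : {i : ι // ∀ g : ↥P, a g i = i}) :
    brauerBasis b a hab hP i = brauerMk ρ P (b i.1) (bFixed_mem b a hab i.2) := by
  rw [brauerBasis, Module.Basis.mk_apply]; rfl

end ActionLemmas

end PermBasis

/- ===== tensor products ===== -/

section Tensor

variable {ρV : Representation k G V} {ρW : Representation k G W} {P : Subgroup G}

lemma tmul_mem_repFixed {v : V} {w : W} (hv : v ∈ repFixed ρV P)
    (hw : w ∈ repFixed ρW P) : v ⊗ₜ[k] w ∈ repFixed (ρV.tprod ρW) P :=
  mem_repFixed.2 fun g => by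
    show TensorProduct.map (ρV ↑g) (ρW ↑g) (v ⊗ₜ[k] w) = v ⊗ₜ[k] w
    rw [TensorProduct.map_tmul, mem_repFixed.1 hv g, mem_repFixed.1 hw g]

lemma tmul_ker_left {w : W} (hw : w ∈ repFixed ρW P) {v : V}
    (hv : v ∈ brauerKer ρV P) : v ⊗ₜ[k] w ∈ brauerKer (ρV.tprod ρW) P := by
  refine mem_brauerKer_map (ρ := ρV) (ρ' := ρV.tprod ρW)
    ((TensorProduct.mk k V W).flip w) ?_ ?_ hv
  · intro g hg x
    show (ρV g x) ⊗ₜ[k] w = TensorProduct.map (ρV g) (ρW g) (x ⊗ₜ[k] w)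
    rw [TensorProduct.map_tmul, mem_repFixed.1 hw ⟨g, hg⟩]
  · intro Q hQ x hx
    refine mem_repFixed.2 fun q => ?_
    show TensorProduct.map (ρV ↑q) (ρW ↑q) (x ⊗ₜ[k] w) = x ⊗ₜ[k] w
    rw [TensorProduct.map_tmul, mem_repFixed.1 hx q,
      mem_repFixed.1 hw ⟨↑q, hQ.le q.2⟩]

lemma tmul_ker_right {v : V} (hv : v ∈ repFixed ρV P) {w : W}
    (hw : w ∈ brauerKer ρW P) : v ⊗ₜ[k] w ∈ brauerKer (ρV.tprod ρW) P := by
  refine mem_brauerKer_map (ρ := ρW) (ρ' := ρV.tprod ρW)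
    (TensorProduct.mk k V W v) ?_ ?_ hw
  · intro g hg x
    show v ⊗ₜ[k] (ρW g x) = TensorProduct.map (ρV g) (ρW g) (v ⊗ₜ[k] x)
    rw [TensorProduct.map_tmul, mem_repFixed.1 hv ⟨g, hg⟩]
  · intro Q hQ x hx
    refine mem_repFixed.2 fun q => ?_
    show TensorProduct.map (ρV ↑q) (ρW ↑q) (v ⊗ₜ[k] x) = v ⊗ₜ[k] x
    rw [TensorProduct.map_tmul, mem_repFixed.1 hx q,
      mem_repFixed.1 hv ⟨↑q, hQ.le q.2⟩]

/-- The canonical bilinear map on fixed points, valued in the Brauer quotient of the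
tensor product. -/
noncomputable def brauerPairing (ρV : Representation k G V) (ρW : Representation k G W)
    (P : Subgroup G) :
    (repFixed ρV P) →ₗ[k] (repFixed ρW P) →ₗ[k] BrauerQuotient (ρV.tprod ρW) P :=
  LinearMap.mk₂ k
    (fun v w => Submodule.Quotient.mk ⟨v.1 ⊗ₜ[k] w.1, tmul_mem_repFixed v.2 w.2⟩)
    (fun v v' w => by
      have h : (⟨(↑(v + v') : V) ⊗ₜ[k] (w : W), tmul_mem_repFixed (v + v').2 w.2⟩ :
          repFixed (ρV.tprod ρW) P)
          = ⟨↑v ⊗ₜ[k] ↑w, tmul_mem_repFixed v.2 w.2⟩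
            + ⟨↑v' ⊗ₜ[k] ↑w, tmul_mem_repFixed v'.2 w.2⟩ := by
        apply Subtype.ext
        show (↑(v + v') : V) ⊗ₜ[k] (w : W) = (↑v : V) ⊗ₜ[k] (↑w : W) + (↑v' : V) ⊗ₜ[k] (↑w : W)
        rw [Submodule.coe_add, TensorProduct.add_tmul]
      beta_reduce
      rw [h, Submodule.Quotient.mk_add])
    (fun c v w => by
      have h : (⟨(↑(c • v) : V) ⊗ₜ[k] (w : W), tmul_mem_repFixed (c • v).2 w.2⟩ :
          repFixed (ρV.tprod ρW) P)
          = c • ⟨↑v ⊗ₜ[k] ↑w, tmul_mem_repFixed v.2 w.2⟩ := by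
        apply Subtype.ext
        show (↑(c • v) : V) ⊗ₜ[k] (w : W) = c • (↑v ⊗ₜ[k] ↑w)
        rw [Submodule.coe_smul, TensorProduct.smul_tmul']
      beta_reduce
      rw [h, Submodule.Quotient.mk_smul])
    (fun v w w' => by
      have h : (⟨(v : V) ⊗ₜ[k] (↑(w + w') : W), tmul_mem_repFixed v.2 (w + w').2⟩ :
          repFixed (ρV.tprod ρW) P)
          = ⟨↑v ⊗ₜ[k] ↑w, tmul_mem_repFixed v.2 w.2⟩
            + ⟨↑v ⊗ₜ[k] ↑w', tmul_mem_repFixed v.2 w'.2⟩ := by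
        apply Subtype.ext
        show (v : V) ⊗ₜ[k] (↑(w + w') : W) = (↑v : V) ⊗ₜ[k] (↑w : W) + (↑v : V) ⊗ₜ[k] (↑w' : W)
        rw [Submodule.coe_add, TensorProduct.tmul_add]
      beta_reduce
      rw [h, Submodule.Quotient.mk_add])
    (fun c v w => by
      have h : (⟨(v : V) ⊗ₜ[k] (↑(c • w) : W), tmul_mem_repFixed v.2 (c • w).2⟩ :
          repFixed (ρV.tprod ρW) P)
          = c • ⟨↑v ⊗ₜ[k] ↑w, tmul_mem_repFixed v.2 w.2⟩ := by
        apply Subtype.ext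
        show (v : V) ⊗ₜ[k] (↑(c • w) : W) = c • (↑v ⊗ₜ[k] ↑w)
        rw [Submodule.coe_smul, TensorProduct.tmul_smul]
      beta_reduce
      rw [h, Submodule.Quotient.mk_smul])

lemma brauerPairing_apply {v : V} (hv : v ∈ repFixed ρV P) {w : W}
    (hw : w ∈ repFixed ρW P) :
    brauerPairing ρV ρW P ⟨v, hv⟩ ⟨w, hw⟩
      = brauerMk (ρV.tprod ρW) P (v ⊗ₜ[k] w) (tmul_mem_repFixed hv hw) := rfl

/-- The canonical map `M[P] ⊗ N[P] → (M ⊗ N)[P]`. -/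
noncomputable def brauerTensorHom (ρV : Representation k G V)
    (ρW : Representation k G W) (P : Subgroup G) :
    (BrauerQuotient ρV P ⊗[k] BrauerQuotient ρW P) →ₗ[k]
      BrauerQuotient (ρV.tprod ρW) P :=
  TensorProduct.lift (Submodule.liftQ (brauerKerIn ρV P)
    { toFun := fun v => Submodule.liftQ (brauerKerIn ρW P) (brauerPairing ρV ρW P v)
        (fun w hw => LinearMap.mem_ker.2 (by
          show Submodule.Quotient.mk
            (⟨(v : V) ⊗ₜ[k] (w : W), tmul_mem_repFixed v.2 w.2⟩ :
              repFixed (ρV.tprod ρW) P) = 0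
          rw [Submodule.Quotient.mk_eq_zero]
          exact tmul_ker_right v.2 hw))
      map_add' := fun v v' => brauer_hom_ext fun w hw => by
        show brauerPairing ρV ρW P (v + v') ⟨w, hw⟩
          = brauerPairing ρV ρW P v ⟨w, hw⟩ + brauerPairing ρV ρW P v' ⟨w, hw⟩
        rw [map_add]; rfl
      map_smul' := fun c v => brauer_hom_ext fun w hw => by
        show brauerPairing ρV ρW P (c • v) ⟨w, hw⟩
          = c • brauerPairing ρV ρW P v ⟨w, hw⟩
        rw [map_smul]; rfl }
    (fun v hv => LinearMap.mem_ker.2 (brauer_hom_ext (g := 0) fun w hw => by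
      show Submodule.Quotient.mk
        (⟨(v : V) ⊗ₜ[k] w, tmul_mem_repFixed v.2 hw⟩ :
          repFixed (ρV.tprod ρW) P) = (0 : BrauerQuotient (ρV.tprod ρW) P)
      rw [Submodule.Quotient.mk_eq_zero]
      exact tmul_ker_left hw hv)))

lemma brauerTensorHom_mk {v : V} (hv : v ∈ repFixed ρV P) {w : W}
    (hw : w ∈ repFixed ρW P) :
    brauerTensorHom ρV ρW P (brauerMk ρV P v hv ⊗ₜ[k] brauerMk ρW P w hw)
      = brauerMk (ρV.tprod ρW) P (v ⊗ₜ[k] w) (tmul_mem_repFixed hv hw) := rfl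

section TensorBasis

variable [Fintype G] {p : ℕ} [Fact p.Prime] [CharP k p]
variable {ρV : Representation k G V} {ρW : Representation k G W} {P : Subgroup G}
variable {ιV ιW : Type} (bV : Module.Basis ιV k V) (aV : ↥P → ιV → ιV)
  (bW : Module.Basis ιW k W) (aW : ↥P → ιW → ιW)

theorem brauerTensorHom_bijective (hP : IsPGroup p ↥P)
    (habV : ∀ (g : ↥P) i, ρV ↑g (bV i) = bV (aV g i))
    (habW : ∀ (g : ↥P) i, ρW ↑g (bW i) = bW (aW g i)) :
    Function.Bijective (brauerTensorHom ρV ρW P) := by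
  classical
  set aT : ↥P → ιV × ιW → ιV × ιW := fun g ij => (aV g ij.1, aW g ij.2) with haT
  have habT : ∀ (g : ↥P) (ij : ιV × ιW),
      (ρV.tprod ρW) ↑g ((bV.tensorProduct bW) ij)
        = (bV.tensorProduct bW) (aT g ij) := by
    rintro g ⟨i, j⟩
    show (ρV.tprod ρW) ↑g ((bV.tensorProduct bW) (i, j))
      = (bV.tensorProduct bW) (aV g i, aW g j)
    rw [Module.Basis.tensorProduct_apply, Module.Basis.tensorProduct_apply]
    show TensorProduct.map (ρV ↑g) (ρW ↑g) (bV i ⊗ₜ[k] bW j) = _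
    rw [TensorProduct.map_tmul, habV, habW]
  set BV := brauerBasis bV aV habV hP with hBV
  set BW := brauerBasis bW aW habW hP with hBW
  set BT := brauerBasis (bV.tensorProduct bW) aT habT hP with hBT
  set eqv : ({i : ιV // ∀ g : ↥P, aV g i = i} × {j : ιW // ∀ g : ↥P, aW g j = j})
      ≃ {ij : ιV × ιW // ∀ g : ↥P, aT g ij = ij} :=
    { toFun := fun q => ⟨(q.1.1, q.2.1), fun g => Prod.ext (q.1.2 g) (q.2.2 g)⟩
      invFun := fun pp => (⟨pp.1.1, fun g => congrArg Prod.fst (pp.2 g)⟩,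
        ⟨pp.1.2, fun g => congrArg Prod.snd (pp.2 g)⟩)
      left_inv := fun q => rfl
      right_inv := fun pp => Subtype.ext rfl } with heqv
  have hagree : ∀ q, brauerTensorHom ρV ρW P ((BV.tensorProduct BW) q) = BT (eqv q) := by
    rintro ⟨i, j⟩
    rw [Module.Basis.tensorProduct_apply]
    rw [hBV, hBW, hBT, brauerBasis_apply, brauerBasis_apply, brauerTensorHom_mk,
      brauerBasis_apply]
    refine brauerMk_congr _ _ _ _ ?_
    show bV i.1 ⊗ₜ[k] bW j.1 = (bV.tensorProduct bW) ((eqv (i, j)).1)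
    rw [show ((eqv (i, j)).1 : ιV × ιW) = (i.1, j.1) from rfl, Module.Basis.tensorProduct_apply]
  have heq : (brauerTensorHom ρV ρW P)
      = (Module.Basis.equiv (BV.tensorProduct BW) BT eqv).toLinearMap := by
    refine Module.Basis.ext (BV.tensorProduct BW) fun q => ?_
    rw [hagree q]
    show BT (eqv q) = (BV.tensorProduct BW).equiv BT eqv ((BV.tensorProduct BW) q)
    rw [Module.Basis.equiv_apply]
  rw [heq]
  exact (Module.Basis.equiv (BV.tensorProduct BW) BT eqv).bijective

end TensorBasis

/-- Conjunct 1 of the theorem, packaged. -/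
theorem brauer_tensor_iso [Fintype G] (p : ℕ) [Fact p.Prime] [CharP k p]
    {P : Subgroup G} (hP : IsPGroup p ↥P)
    (ρV : Representation k G V) (ρW : Representation k G W)
    (hV : IsPPermutationRep p ρV) (hW : IsPPermutationRep p ρW) :
    ∃ e : ((BrauerQuotient ρV P) ⊗[k] (BrauerQuotient ρW P)) ≃ₗ[k]
        (BrauerQuotient (ρV.tprod ρW) P),
      ∀ (v : V) (hv : v ∈ repFixed ρV P) (w : W) (hw : w ∈ repFixed ρW P)
        (hvw : v ⊗ₜ[k] w ∈ repFixed (ρV.tprod ρW) P),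
        e (brauerMk ρV P v hv ⊗ₜ[k] brauerMk ρW P w hw) =
          brauerMk (ρV.tprod ρW) P (v ⊗ₜ[k] w) hvw := by
  obtain ⟨S, hPS⟩ := hP.exists_le_sylow
  obtain ⟨ιV, bV, hbV⟩ := hV S
  obtain ⟨ιW, bW, hbW⟩ := hW S
  have habV : ∀ (g : ↥P) (i : ιV), ρV ↑g (bV i)
      = bV ((hbV (⟨↑g, hPS g.2⟩ : ↥(S : Subgroup G)) i).choose) :=
    fun g i => (hbV (⟨↑g, hPS g.2⟩ : ↥(S : Subgroup G)) i).choose_spec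
  have habW : ∀ (g : ↥P) (i : ιW), ρW ↑g (bW i)
      = bW ((hbW (⟨↑g, hPS g.2⟩ : ↥(S : Subgroup G)) i).choose) :=
    fun g i => (hbW (⟨↑g, hPS g.2⟩ : ↥(S : Subgroup G)) i).choose_spec
  have hbij := brauerTensorHom_bijective bV
    (fun g i => (hbV (⟨↑g, hPS g.2⟩ : ↥(S : Subgroup G)) i).choose) bW
    (fun g i => (hbW (⟨↑g, hPS g.2⟩ : ↥(S : Subgroup G)) i).choose) hP habV habW
  refine ⟨LinearEquiv.ofBijective (brauerTensorHom ρV ρW P) hbij,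
    fun v hv w hw hvw => ?_⟩
  show brauerTensorHom ρV ρW P (brauerMk ρV P v hv ⊗ₜ[k] brauerMk ρW P w hw) = _
  exact brauerTensorHom_mk hv hw

end Tensor

/- ===== products ===== -/

section Prod

variable {ρV : Representation k G V} {ρW : Representation k G W} {P : Subgroup G}

lemma mem_repFixed_prod {Q : Subgroup G} {x : V × W} :
    x ∈ repFixed (prodRep ρV ρW) Q ↔ x.1 ∈ repFixed ρV Q ∧ x.2 ∈ repFixed ρW Q := by
  constructor
  · intro h
    exact ⟨fun g => congrArg Prod.fst (mem_repFixed.1 h g),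
      fun g => congrArg Prod.snd (mem_repFixed.1 h g)⟩
  · rintro ⟨h1, h2⟩
    exact mem_repFixed.2 fun g => Prod.ext (mem_repFixed.1 h1 g) (mem_repFixed.1 h2 g)

lemma fst_mem_brauerKer {x : V × W} (hx : x ∈ brauerKer (prodRep ρV ρW) P) :
    x.1 ∈ brauerKer ρV P :=
  mem_brauerKer_map (LinearMap.fst k V W) (fun _ _ _ => rfl)
    (fun _ _ _ hy => (mem_repFixed_prod.1 hy).1) hx

lemma snd_mem_brauerKer {x : V × W} (hx : x ∈ brauerKer (prodRep ρV ρW) P) :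
    x.2 ∈ brauerKer ρW P :=
  mem_brauerKer_map (LinearMap.snd k V W) (fun _ _ _ => rfl)
    (fun _ _ _ hy => (mem_repFixed_prod.1 hy).2) hx

lemma inl_mem_brauerKer {v : V} (hv : v ∈ brauerKer ρV P) :
    ((v, 0) : V × W) ∈ brauerKer (prodRep ρV ρW) P :=
  mem_brauerKer_map (LinearMap.inl k V W)
    (fun g _ x => Prod.ext rfl (by show (0 : W) = ρW g 0; rw [map_zero]))
    (fun _ _ _ hy => mem_repFixed_prod.2 ⟨hy, Submodule.zero_mem _⟩) hv

lemma inr_mem_brauerKer {w : W} (hw : w ∈ brauerKer ρW P) :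
    ((0, w) : V × W) ∈ brauerKer (prodRep ρV ρW) P :=
  mem_brauerKer_map (LinearMap.inr k V W)
    (fun g _ x => Prod.ext (by show (0 : V) = ρV g 0; rw [map_zero]) rfl)
    (fun _ _ _ hy => mem_repFixed_prod.2 ⟨Submodule.zero_mem _, hy⟩) hw

/-- The canonical map `(M × N)[P] → M[P] × N[P]`. -/
noncomputable def brauerProdHom (ρV : Representation k G V)
    (ρW : Representation k G W) (P : Subgroup G) :
    BrauerQuotient (prodRep ρV ρW) P →ₗ[k]
      BrauerQuotient ρV P × BrauerQuotient ρW P :=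
  Submodule.liftQ _ (LinearMap.prod
    ((brauerKerIn ρV P).mkQ ∘ₗ (LinearMap.fst k V W).restrict
      (fun _ hx => (mem_repFixed_prod.1 hx).1))
    ((brauerKerIn ρW P).mkQ ∘ₗ (LinearMap.snd k V W).restrict
      (fun _ hx => (mem_repFixed_prod.1 hx).2)))
    (fun x hx => by
      have h1 : (x : V × W).1 ∈ brauerKer ρV P := fst_mem_brauerKer hx
      have h2 : (x : V × W).2 ∈ brauerKer ρW P := snd_mem_brauerKer hx
      refine LinearMap.mem_ker.2 (Prod.ext ?_ ?_)
      · show (brauerKerIn ρV P).mkQ _ = 0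
        rw [Submodule.mkQ_apply, Submodule.Quotient.mk_eq_zero]
        exact h1
      · show (brauerKerIn ρW P).mkQ _ = 0
        rw [Submodule.mkQ_apply, Submodule.Quotient.mk_eq_zero]
        exact h2)

lemma brauerProdHom_mk {v : V} {w : W}
    (h : (v, w) ∈ repFixed (prodRep ρV ρW) P) :
    brauerProdHom ρV ρW P (brauerMk (prodRep ρV ρW) P (v, w) h)
      = (brauerMk ρV P v (mem_repFixed_prod.1 h).1,
         brauerMk ρW P w (mem_repFixed_prod.1 h).2) := rfl

theorem brauerProdHom_bijective :
    Function.Bijective (brauerProdHom ρV ρW P) := by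
  constructor
  · rw [injective_iff_map_eq_zero]
    intro ξ hξ
    obtain ⟨⟨y, hy⟩, rfl⟩ := Submodule.Quotient.mk_surjective _ ξ
    have h1 : y.1 ∈ brauerKer ρV P := by
      have := congrArg Prod.fst hξ
      rw [show (brauerProdHom ρV ρW P (Submodule.Quotient.mk ⟨y, hy⟩)).1
          = (brauerKerIn ρV P).mkQ ⟨y.1, (mem_repFixed_prod.1 hy).1⟩ from rfl] at this
      rw [Prod.fst_zero, Submodule.mkQ_apply, Submodule.Quotient.mk_eq_zero] at this
      exact this
    have h2 : y.2 ∈ brauerKer ρW P := by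
      have := congrArg Prod.snd hξ
      rw [show (brauerProdHom ρV ρW P (Submodule.Quotient.mk ⟨y, hy⟩)).2
          = (brauerKerIn ρW P).mkQ ⟨y.2, (mem_repFixed_prod.1 hy).2⟩ from rfl] at this
      rw [Prod.snd_zero, Submodule.mkQ_apply, Submodule.Quotient.mk_eq_zero] at this
      exact this
    rw [Submodule.Quotient.mk_eq_zero]
    show y ∈ brauerKer (prodRep ρV ρW) P
    have hsplit : y = (y.1, (0 : W)) + ((0 : V), y.2) := by
      ext <;> simp
    rw [hsplit]
    exact add_mem (inl_mem_brauerKer h1) (inr_mem_brauerKer h2)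
  · rintro ⟨ξ, η⟩
    obtain ⟨⟨v, hv⟩, rfl⟩ := Submodule.Quotient.mk_surjective _ ξ
    obtain ⟨⟨w, hw⟩, rfl⟩ := Submodule.Quotient.mk_surjective _ η
    exact ⟨brauerMk (prodRep ρV ρW) P (v, w) (mem_repFixed_prod.2 ⟨hv, hw⟩), rfl⟩

end Prod

/- ===== functoriality along equivariant isomorphisms ===== -/

section Functor

variable {ρV : Representation k G V} {ρW : Representation k G W} {P : Subgroup G}
variable (e : V ≃ₗ[k] W) (he : ∀ (g : G) (v : V), e (ρV g v) = ρW g (e v))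

include he

lemma equiv_repFixed {Q : Subgroup G} {v : V} (hv : v ∈ repFixed ρV Q) :
    e v ∈ repFixed ρW Q :=
  mem_repFixed.2 fun q => by rw [← he ↑q v, mem_repFixed.1 hv q]

lemma equiv_symm_equivariant : ∀ (g : G) (w : W), e.symm (ρW g w) = ρV g (e.symm w) :=
  fun g w => by
    have := he g (e.symm w)
    rw [e.apply_symm_apply] at this
    rw [← this, e.symm_apply_apply]

lemma equiv_brauerKer {v : V} (hv : v ∈ brauerKer ρV P) : e v ∈ brauerKer ρW P :=
  mem_brauerKer_map e.toLinearMap (fun g _ x => he g x)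
    (fun _ _ _ hx => equiv_repFixed e he hx) hv

/-- Equivariant isomorphisms descend to the Brauer quotient. -/
noncomputable def brauerCongr : BrauerQuotient ρV P ≃ₗ[k] BrauerQuotient ρW P := by
  refine LinearEquiv.ofLinear
    (Submodule.mapQ (brauerKerIn ρV P) (brauerKerIn ρW P)
      (e.toLinearMap.restrict fun _ hv => equiv_repFixed e he hv)
      (fun v hv => by show (e v : W) ∈ brauerKer ρW P; exact equiv_brauerKer e he hv))
    (Submodule.mapQ (brauerKerIn ρW P) (brauerKerIn ρV P)
      (e.symm.toLinearMap.restrict fun _ hw =>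
        equiv_repFixed e.symm (equiv_symm_equivariant e he) hw)
      (fun w hw => by
        show (e.symm w : V) ∈ brauerKer ρV P
        exact equiv_brauerKer e.symm (equiv_symm_equivariant e he) hw))
    (brauer_hom_ext fun w hw => by
      show Submodule.Quotient.mk ⟨e (e.symm w), _⟩ = brauerMk ρW P w hw
      exact brauerMk_congr ρW P _ hw (e.apply_symm_apply w))
    (brauer_hom_ext fun v hv => by
      show Submodule.Quotient.mk ⟨e.symm (e v), _⟩ = brauerMk ρV P v hv
      exact brauerMk_congr ρV P _ hv (e.symm_apply_apply v))

lemma brauerCongr_mk {v : V} (hv : v ∈ repFixed ρV P) :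
    brauerCongr e he (brauerMk ρV P v hv)
      = brauerMk ρW P (e v) (equiv_repFixed e he hv) := rfl

end Functor

/- ===== Weyl-equivariance lemmas ===== -/

section WeylEquiv

variable {ρV : Representation k G V} {ρW : Representation k G W} {P : Subgroup G}

lemma equivRep_weylRep (h : EquivRep ρV ρW) :
    EquivRep (weylRep ρV P) (weylRep ρW P) := by
  obtain ⟨e, he⟩ := h
  refine ⟨brauerCongr e he, fun g ξ => ?_⟩
  induction g using QuotientGroup.induction_on with
  | H n =>
    obtain ⟨⟨v, hv⟩, rfl⟩ := Submodule.Quotient.mk_surjective _ ξ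
    show brauerCongr e he (weylRep ρV P (QuotientGroup.mk n) (brauerMk ρV P v hv))
      = weylRep ρW P (QuotientGroup.mk n) (brauerCongr e he (brauerMk ρV P v hv))
    rw [weylRep_mk, brauerCongr_mk, brauerCongr_mk, weylRep_mk]
    exact brauerMk_congr ρW P _ _ (he ↑n v)

lemma weylRep_prod_equivRep :
    EquivRep (weylRep (prodRep ρV ρW) P) (prodRep (weylRep ρV P) (weylRep ρW P)) := by
  refine ⟨LinearEquiv.ofBijective (brauerProdHom ρV ρW P) brauerProdHom_bijective,
    fun g ξ => ?_⟩
  induction g using QuotientGroup.induction_on with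
  | H n =>
    obtain ⟨⟨y, hy⟩, rfl⟩ := Submodule.Quotient.mk_surjective _ ξ
    obtain ⟨v, w⟩ := y
    show brauerProdHom ρV ρW P
        (weylRep (prodRep ρV ρW) P (QuotientGroup.mk n)
          (brauerMk (prodRep ρV ρW) P (v, w) hy))
      = prodRep (weylRep ρV P) (weylRep ρW P) (QuotientGroup.mk n)
          (brauerProdHom ρV ρW P (brauerMk (prodRep ρV ρW) P (v, w) hy))
    rw [weylRep_mk, brauerProdHom_mk, brauerProdHom_mk]
    show _ = (weylRep ρV P (QuotientGroup.mk n) (brauerMk ρV P v _),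
      weylRep ρW P (QuotientGroup.mk n) (brauerMk ρW P w _))
    rw [weylRep_mk, weylRep_mk]
    refine Prod.ext ?_ ?_
    · exact brauerMk_congr ρV P _ _ rfl
    · exact brauerMk_congr ρW P _ _ rfl

lemma weylRep_tensor_equivRep
    (e : ((BrauerQuotient ρV P) ⊗[k] (BrauerQuotient ρW P)) ≃ₗ[k]
        (BrauerQuotient (ρV.tprod ρW) P))
    (hform : ∀ (v : V) (hv : v ∈ repFixed ρV P) (w : W) (hw : w ∈ repFixed ρW P)
      (hvw : v ⊗ₜ[k] w ∈ repFixed (ρV.tprod ρW) P),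
      e (brauerMk ρV P v hv ⊗ₜ[k] brauerMk ρW P w hw) =
        brauerMk (ρV.tprod ρW) P (v ⊗ₜ[k] w) hvw) :
    EquivRep (weylRep (ρV.tprod ρW) P) ((weylRep ρV P).tprod (weylRep ρW P)) := by
  have key : ∀ (n : ↥(Subgroup.normalizer (P : Set G))) (y : (BrauerQuotient ρV P) ⊗[k] (BrauerQuotient ρW P)),
      weylRep (ρV.tprod ρW) P (QuotientGroup.mk n) (e y)
        = e (((weylRep ρV P).tprod (weylRep ρW P)) (QuotientGroup.mk n) y) := by
    intro n y
    induction y using TensorProduct.induction_on with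
    | zero => rw [map_zero, map_zero, map_zero, map_zero]
    | tmul ξ η =>
      obtain ⟨⟨v, hv⟩, rfl⟩ := Submodule.Quotient.mk_surjective _ ξ
      obtain ⟨⟨w, hw⟩, rfl⟩ := Submodule.Quotient.mk_surjective _ η
      have h1 : e (brauerMk ρV P v hv ⊗ₜ[k] brauerMk ρW P w hw)
          = brauerMk (ρV.tprod ρW) P (v ⊗ₜ[k] w) (tmul_mem_repFixed hv hw) :=
        hform v hv w hw _
      rw [show (Submodule.Quotient.mk ⟨v, hv⟩ ⊗ₜ[k] Submodule.Quotient.mk ⟨w, hw⟩ :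
          (BrauerQuotient ρV P) ⊗[k] (BrauerQuotient ρW P))
        = brauerMk ρV P v hv ⊗ₜ[k] brauerMk ρW P w hw from rfl]
      rw [h1, weylRep_mk]
      have h2 : ((weylRep ρV P).tprod (weylRep ρW P)) (QuotientGroup.mk n)
          (brauerMk ρV P v hv ⊗ₜ[k] brauerMk ρW P w hw)
          = (weylRep ρV P (QuotientGroup.mk n) (brauerMk ρV P v hv))
            ⊗ₜ[k] (weylRep ρW P (QuotientGroup.mk n) (brauerMk ρW P w hw)) := by
        show TensorProduct.map _ _ _ = _
        rw [TensorProduct.map_tmul]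
      rw [h2, weylRep_mk, weylRep_mk,
        hform _ _ _ _ (tmul_mem_repFixed (repFixed_normalizer hv n.2)
          (repFixed_normalizer hw n.2))]
      refine brauerMk_congr _ P _ _ ?_
      show ((ρV.tprod ρW) ↑n) (v ⊗ₜ[k] w) = _
      show TensorProduct.map (ρV ↑n) (ρW ↑n) (v ⊗ₜ[k] w) = _
      rw [TensorProduct.map_tmul]
    | add y₁ y₂ hy₁ hy₂ => rw [map_add, map_add, hy₁, hy₂, map_add, map_add]
  refine ⟨e.symm, fun g x => ?_⟩
  induction g using QuotientGroup.induction_on with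
  | H n =>
    have hx : x = e (e.symm x) := (e.apply_symm_apply x).symm
    rw [hx, key n (e.symm x), e.symm_apply_apply, e.symm_apply_apply]

end WeylEquiv

/- ===== EquivRep utilities ===== -/

lemma equivRep_refl (ρ : Representation k G V) : EquivRep ρ ρ :=
  ⟨LinearEquiv.refl k V, fun _ _ => rfl⟩

lemma equivRep_trans {U : Type} [AddCommGroup U] [Module k U]
    {ρ1 : Representation k G V} {ρ2 : Representation k G W} {ρ3 : Representation k G U}
    (h1 : EquivRep ρ1 ρ2) (h2 : EquivRep ρ2 ρ3) : EquivRep ρ1 ρ3 := by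
  obtain ⟨e, he⟩ := h1
  obtain ⟨f, hf⟩ := h2
  exact ⟨e.trans f, fun g v => by
    rw [LinearEquiv.trans_apply, LinearEquiv.trans_apply, he, hf]⟩

lemma equivRep_symm {ρ1 : Representation k G V} {ρ2 : Representation k G W}
    (h : EquivRep ρ1 ρ2) : EquivRep ρ2 ρ1 := by
  obtain ⟨e, he⟩ := h
  exact ⟨e.symm, equiv_symm_equivariant e he⟩

/- ===== p-permutation closure ===== -/

section PPerm

variable {p : ℕ}

lemma isPPermutationRep_tprod {ρV : Representation k G V} {ρW : Representation k G W}
    (hV : IsPPermutationRep p ρV) (hW : IsPPermutationRep p ρW) :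
    IsPPermutationRep p (ρV.tprod ρW) := by
  intro S
  obtain ⟨ιV, bV, hbV⟩ := hV S
  obtain ⟨ιW, bW, hbW⟩ := hW S
  refine ⟨ιV × ιW, bV.tensorProduct bW, ?_⟩
  rintro g ⟨i, j⟩
  obtain ⟨i', hi'⟩ := hbV g i
  obtain ⟨j', hj'⟩ := hbW g j
  refine ⟨(i', j'), ?_⟩
  show (ρV.tprod ρW) ↑g ((bV.tensorProduct bW) (i, j)) = (bV.tensorProduct bW) (i', j')
  rw [Module.Basis.tensorProduct_apply, Module.Basis.tensorProduct_apply]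
  show TensorProduct.map (ρV ↑g) (ρW ↑g) (bV i ⊗ₜ[k] bW j) = _
  rw [TensorProduct.map_tmul, show ρV ↑g (bV i) = bV i' from hi',
    show ρW ↑g (bW j) = bW j' from hj']

lemma isPPermutationRep_trivial :
    IsPPermutationRep p (Representation.trivial k (G := G) (V := k)) :=
  fun _ => ⟨PUnit, Module.Basis.singleton PUnit k, fun _ i => ⟨i, rfl⟩⟩

end PPerm

/- ===== the Weyl representation on the Brauer quotient is p-permutation ===== -/

section WeylPPerm

variable [Fintype G] {p : ℕ} [Fact p.Prime] [CharP k p]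
variable {ρ : Representation k G V} {P : Subgroup G}

theorem isPPermutationRep_weylRep (hP : IsPGroup p ↥P) (hρ : IsPPermutationRep p ρ) :
    IsPPermutationRep p (weylRep ρ P) := by
  intro S'
  set H : Subgroup ↥(Subgroup.normalizer (P : Set G)) :=
    (S' : Subgroup (WeylGroup P)).comap
      (QuotientGroup.mk' (P.subgroupOf (Subgroup.normalizer (P : Set G)))) with hH
  have hHp : IsPGroup p ↥H := by
    refine IsPGroup.comap_of_ker_isPGroup S'.2 _ ?_
    rw [QuotientGroup.ker_mk']
    exact hP.comap_subtype
  set H' : Subgroup G := H.map (Subgroup.normalizer (P : Set G)).subtype with hH'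
  have hH'p : IsPGroup p ↥H' := hHp.map _
  have hPH' : P ≤ H' := by
    intro x hx
    refine ⟨⟨x, Subgroup.le_normalizer hx⟩, ?_, rfl⟩
    show QuotientGroup.mk' (P.subgroupOf (Subgroup.normalizer (P : Set G))) ⟨x, Subgroup.le_normalizer hx⟩
      ∈ (S' : Subgroup (WeylGroup P))
    have h1 : QuotientGroup.mk' (P.subgroupOf (Subgroup.normalizer (P : Set G)))
        ⟨x, Subgroup.le_normalizer hx⟩ = 1 :=
      (QuotientGroup.eq_one_iff _).2 hx
    rw [h1]
    exact one_mem _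
  obtain ⟨S'', hS''⟩ := hH'p.exists_le_sylow
  obtain ⟨ι, b, hb⟩ := hρ S''
  have hPS'' : P ≤ (S'' : Subgroup G) := hPH'.trans hS''
  have habS : ∀ (g : ↥(S'' : Subgroup G)) i, ρ ↑g (b i) = b ((hb g i).choose) :=
    fun g i => (hb g i).choose_spec
  set a : ↥P → ι → ι := fun g i => (hb ⟨↑g, hPS'' g.2⟩ i).choose with ha
  have hab : ∀ (g : ↥P) i, ρ ↑g (b i) = b (a g i) :=
    fun g i => habS ⟨↑g, hPS'' g.2⟩ i
  refine ⟨{i : ι // ∀ g : ↥P, a g i = i}, brauerBasis b a hab hP, ?_⟩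
  intro g' i
  obtain ⟨w, hw⟩ := QuotientGroup.mk_surjective (↑g' : WeylGroup P)
  have hwH : w ∈ H := by
    show QuotientGroup.mk' (P.subgroupOf (Subgroup.normalizer (P : Set G))) w ∈ (S' : Subgroup (WeylGroup P))
    rw [show QuotientGroup.mk' (P.subgroupOf (Subgroup.normalizer (P : Set G))) w
      = QuotientGroup.mk w from rfl, hw]
    exact g'.2
  have hnS'' : (↑w : G) ∈ (S'' : Subgroup G) := hS'' ⟨w, hwH, rfl⟩
  set j₀ : ι := (hb ⟨↑w, hnS''⟩ i.1).choose with hj₀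
  have hbj₀ : ρ ↑w (b i.1) = b j₀ := habS ⟨↑w, hnS''⟩ i.1
  have hj₀fix : ∀ u : ↥P, a u j₀ = j₀ := by
    intro u
    have hconj : ((w : G))⁻¹ * (u : G) * (w : G) ∈ P := by
      have := Subgroup.mem_normalizer_iff.1 ((Subgroup.normalizer (P : Set G)).inv_mem w.2) (u : G)
      simpa using this.1 u.2
    have hfixconj : ρ (((w : G))⁻¹ * (u : G) * (w : G)) (b i.1) = b i.1 := by
      rw [show (((w : G))⁻¹ * (u : G) * (w : G))
        = ↑(⟨((w : G))⁻¹ * (u : G) * (w : G), hconj⟩ : ↥P) from rfl, hab, i.2]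
    refine b.injective ?_
    rw [← hab u j₀, ← hbj₀]
    calc ρ (u : G) (ρ (w : G) (b i.1)) = ρ ((u : G) * (w : G)) (b i.1) := by
          rw [map_mul]; rfl
      _ = ρ ((w : G) * (((w : G))⁻¹ * (u : G) * (w : G))) (b i.1) := by congr 1; group
      _ = ρ (w : G) (ρ (((w : G))⁻¹ * (u : G) * (w : G)) (b i.1)) := by rw [map_mul]; rfl
      _ = ρ (w : G) (b i.1) := by rw [hfixconj]
  refine ⟨⟨j₀, hj₀fix⟩, ?_⟩
  show weylRep ρ P (↑g' : WeylGroup P) (brauerBasis b a hab hP i)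
    = brauerBasis b a hab hP ⟨j₀, hj₀fix⟩
  rw [brauerBasis_apply, brauerBasis_apply, ← hw, weylRep_mk]
  exact brauerMk_congr ρ P _ _ hbj₀

/-- Any representation of the Weyl group satisfying the canonical formula on classes
equals the canonical Weyl representation. -/
lemma sigma_eq_weylRep {σ : Representation k (WeylGroup P) (BrauerQuotient ρ P)}
    (hσ : ∀ (n : ↥(Subgroup.normalizer (P : Set G))) (v : V) (hv : v ∈ repFixed ρ P)
      (hv' : ρ ↑n v ∈ repFixed ρ P),
      σ (QuotientGroup.mk n) (brauerMk ρ P v hv) = brauerMk ρ P (ρ ↑n v) hv') :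
    σ = weylRep ρ P := by
  refine MonoidHom.ext fun g => ?_
  induction g using QuotientGroup.induction_on with
  | H n =>
    refine brauer_hom_ext fun v hv => ?_
    rw [hσ n v hv (repFixed_normalizer hv n.2), weylRep_mk]

end WeylPPerm

/- ===== the trivial representation ===== -/

section Trivial

variable [Fintype G] {p : ℕ} [Fact p.Prime] [CharP k p] {P : Subgroup G}

lemma trivial_brauerKer (hP : IsPGroup p ↥P) :
    brauerKer (Representation.trivial k (G := G) (V := k)) P = ⊥ := by
  refine le_bot_iff.1 (iSup₂_le fun Q hQ => Submodule.span_le.2 ?_)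
  rintro m ⟨T, hT, x, hx, rfl⟩
  have hsum : ∑ g ∈ T, (Representation.trivial k (G := G) (V := k)) g x
      = ((T.card : ℕ) : k) • x := by
    rw [Finset.sum_congr rfl (fun g _ => show
      (Representation.trivial k (G := G) (V := k)) g x = x from rfl),
      Finset.sum_const, ← Nat.cast_smul_eq_nsmul k]
  have hz : ((T.card : ℕ) : k) = 0 :=
    (CharP.cast_eq_zero_iff k p T.card).2 (dvd_card_transversal hQ hT hP)
  rw [SetLike.mem_coe, hsum, hz, zero_smul]
  exact Submodule.zero_mem ⊥

lemma weylRep_trivial_equivRep (hP : IsPGroup p ↥P) :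
    EquivRep (weylRep (Representation.trivial k (G := G) (V := k)) P)
      (Representation.trivial k (G := WeylGroup P) (V := k)) := by
  have hker : brauerKerIn (Representation.trivial k (G := G) (V := k)) P = ⊥ := by
    rw [Submodule.eq_bot_iff]
    rintro x hx
    have h1 : (x : k) ∈ brauerKer (Representation.trivial k (G := G) (V := k)) P := hx
    rw [trivial_brauerKer hP, Submodule.mem_bot] at h1
    exact Subtype.ext h1
  have hfix : repFixed (Representation.trivial k (G := G) (V := k)) P = ⊤ :=
    eq_top_iff.2 fun v _ => mem_repFixed.2 fun g => rfl
  set e : BrauerQuotient (Representation.trivial k (G := G) (V := k)) P ≃ₗ[k] k :=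
    (Submodule.quotEquivOfEqBot _ hker).trans
      ((LinearEquiv.ofEq _ _ hfix).trans Submodule.topEquiv) with he
  refine ⟨e, fun g x => ?_⟩
  have hgx : weylRep (Representation.trivial k (G := G) (V := k)) P g x = x := by
    induction g using QuotientGroup.induction_on with
    | H n =>
      obtain ⟨⟨v, hv⟩, rfl⟩ := Submodule.Quotient.mk_surjective _ x
      rw [show (Submodule.Quotient.mk ⟨v, hv⟩ :
          BrauerQuotient (Representation.trivial k (G := G) (V := k)) P)
        = brauerMk (Representation.trivial k (G := G) (V := k)) P v hv from rfl]
      rw [weylRep_mk]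
      exact brauerMk_congr _ P _ _ rfl
  rw [hgx]
  rfl

end Trivial

end BrauerAux

open BrauerAux


/-- for `p`-permutation `kG`-modules `M, N` and a `p`-subgroup `P ≤ G`,
the canonical bilinear map induces an isomorphism `M[P] ⊗ N[P] ≅ (M ⊗ N)[P]` of
`k[N_G(P)/P]`-modules (an isomorphism sending `mk v ⊗ mk w` to `mk (v ⊗ w)`, hence
automatically equivariant for the induced actions); consequently the Brauer quotient
at `P` induces a ring homomorphism `pp_k(G) → pp_k(N_G(P)/P)`. -/
theorem brauerQuotient_tensor_and_ringHom
    {k : Type} [Field k] {G : Type} [Group G] [Fintype G]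
    (p : ℕ) [Fact p.Prime] [CharP k p]
    (P : Subgroup G) (hP : IsPGroup p ↥P)
    (AG : PPermRing k G p) (AN : PPermRing k (WeylGroup P) p) :
    (∀ {V W : Type} [AddCommGroup V] [Module k V] [AddCommGroup W] [Module k W]
        (ρV : Representation k G V) (ρW : Representation k G W),
        IsPPermutationRep p ρV → IsPPermutationRep p ρW →
        ∃ e : ((BrauerQuotient ρV P) ⊗[k] (BrauerQuotient ρW P)) ≃ₗ[k]
            (BrauerQuotient (ρV.tprod ρW) P),
          ∀ (v : V) (hv : v ∈ repFixed ρV P) (w : W) (hw : w ∈ repFixed ρW P)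
            (hvw : v ⊗ₜ[k] w ∈ repFixed (ρV.tprod ρW) P),
            e (brauerMk ρV P v hv ⊗ₜ[k] brauerMk ρW P w hw) =
              brauerMk (ρV.tprod ρW) P (v ⊗ₜ[k] w) hvw) ∧
    ∃ Br : AG.A →+* AN.A,
      ∀ (M : PPermClass k G p)
        (σ : Representation k (WeylGroup P) (BrauerQuotient M.ρ P)),
        (∀ (n : ↥(Subgroup.normalizer (P : Set G))) (v : M.V) (hv : v ∈ repFixed M.ρ P)
            (hv' : M.ρ ↑n v ∈ repFixed M.ρ P),
          σ (QuotientGroup.mk n) (brauerMk M.ρ P v hv) =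
            brauerMk M.ρ P (M.ρ ↑n v) hv') →
        ∀ R : PPermClass k (WeylGroup P) p, EquivRep R.ρ σ →
          Br (AG.cls M) = AN.cls R := by
  classical
  constructor
  · intro V W _ _ _ _ ρV ρW hV hW
    exact brauer_tensor_iso p hP ρV ρW hV hW
  · -- the Brauer class construction
    set BrCl : PPermClass k G p → PPermClass k (WeylGroup P) p := fun M =>
      { V := BrauerQuotient M.ρ P
        ρ := weylRep M.ρ P
        pperm := isPPermutationRep_weylRep hP M.pperm } with hBrCl
    set f : PPermClass k G p → AN.A := fun M => AN.cls (BrCl M) with hf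
    have hadd : ∀ M N R, EquivRep R.ρ (prodRep M.ρ N.ρ) → f R = f M + f N := by
      intro M N R hR
      exact AN.cls_add (BrCl M) (BrCl N) (BrCl R)
        (equivRep_trans (equivRep_weylRep hR) weylRep_prod_equivRep)
    obtain ⟨φ, hφ, -⟩ := AG.univ AN.A f hadd
    have hmul_gen : ∀ M N : PPermClass k G p,
        φ (AG.cls M * AG.cls N) = φ (AG.cls M) * φ (AG.cls N) := by
      intro M N
      set T : PPermClass k G p :=
        { V := M.V ⊗[k] N.V
          ρ := M.ρ.tprod N.ρ
          pperm := isPPermutationRep_tprod M.pperm N.pperm } with hT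
      have h1 : AG.cls M * AG.cls N = AG.cls T :=
        (AG.cls_mul M N T (equivRep_refl _)).symm
      obtain ⟨e, hform⟩ := brauer_tensor_iso p hP M.ρ N.ρ M.pperm N.pperm
      have h2 : AN.cls (BrCl T) = AN.cls (BrCl M) * AN.cls (BrCl N) :=
        AN.cls_mul (BrCl M) (BrCl N) (BrCl T) (weylRep_tensor_equivRep e hform)
      rw [h1, hφ, hf]
      show AN.cls (BrCl T) = _
      rw [h2, hφ M, hφ N]
    have hone : φ 1 = 1 := by
      set Tr : PPermClass k G p :=
        { V := k
          ρ := Representation.trivial k (G := G) (V := k)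
          pperm := isPPermutationRep_trivial } with hTr
      have h1 : (1 : AG.A) = AG.cls Tr := (AG.cls_one Tr (equivRep_refl _)).symm
      have h2 : AN.cls (BrCl Tr) = 1 :=
        AN.cls_one (BrCl Tr) (weylRep_trivial_equivRep hP)
      rw [h1, hφ]
      exact h2
    have hmem : ∀ x : AG.A, x ∈ AddSubgroup.closure (Set.range AG.cls) := by
      intro x; rw [AG.span]; trivial
    have hmul_cls : ∀ (M : PPermClass k G p) (y : AG.A),
        φ (AG.cls M * y) = φ (AG.cls M) * φ y := by
      intro M y
      refine AddSubgroup.closure_induction ?_ ?_ ?_ ?_ (hmem y)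
      · rintro y ⟨N, rfl⟩
        exact hmul_gen M N
      · rw [mul_zero, map_zero, mul_zero]
      · intro a b _ _ h1 h2
        rw [mul_add, map_add, map_add, h1, h2, mul_add]
      · intro a _ h1
        rw [mul_neg, map_neg, map_neg, h1, mul_neg]
    have hmul : ∀ x y : AG.A, φ (x * y) = φ x * φ y := by
      intro x y
      refine AddSubgroup.closure_induction ?_ ?_ ?_ ?_ (hmem x)
      · rintro x ⟨M, rfl⟩
        exact hmul_cls M y
      · rw [zero_mul, map_zero, zero_mul]
      · intro a b _ _ h1 h2
        rw [add_mul, map_add, map_add, h1, h2, add_mul]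
      · intro a _ h1
        rw [neg_mul, map_neg, map_neg, h1, neg_mul]
    set Brm : AG.A →* AN.A :=
      { toFun := φ, map_one' := hone, map_mul' := fun x y => hmul x y } with hBrm
    refine ⟨RingHom.mk' Brm (map_add φ), ?_⟩
    intro M σ hσ R hR
    have hσeq : σ = weylRep M.ρ P := sigma_eq_weylRep hσ
    have hRL : EquivRep R.ρ (BrCl M).ρ := by
      show EquivRep R.ρ (weylRep M.ρ P)
      rw [← hσeq]
      exact hR
    have hcls := AN.cls_congr R (BrCl M) hRL
    show φ (AG.cls M) = AN.cls R
    rw [hφ, hf]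
    exact hcls.symm
end

section
/- Let G be a cyclic group of order n prime to p. Then for each t ∈ G, the primitive idempotent F^G_{1,t} of K ⊗_Z pp_k(G) is given by F^G_{1,t} = (1/n) Σ_{φ ∈ Hom(G,k^×)} φ̃(t^{-1}) [k_φ], where k_φ is the one-dimensional kG-module with G acting via φ, and φ̃ is its Brauer character. -/
noncomputable section CorePair

/-- A pair `(P, s)` of a `p`-subgroup `P` and a `p'`-element `s` of `N_G(P)/P`,
encoded by a `p'`-element `g` of `N_G(P)` lifting `s`. -/
structure PPair (p : ℕ) (G : Type) [Group G] : Type where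
  P : Subgroup G
  g : G
  hP : IsPGroup p ↥P
  mem : g ∈ Subgroup.normalizer (P : Set G)
  ord : ¬ p ∣ orderOf g

/-- `G`-conjugacy of pairs: `x` conjugates `(P, s)` to `(Q, t)` (the elements `g`
are compared modulo the `p`-subgroup, i.e. they have the same image in the Weyl
group). -/
def PPair.Conj {p : ℕ} {G : Type} [Group G] (a b : PPair p G) : Prop :=
  ∃ x : G, b.P = a.P.map (MulAut.conj x).toMonoidHom ∧ (x * a.g * x⁻¹)⁻¹ * b.g ∈ b.P

/-- The image `s ∈ N_G(P)/P` of the chosen lift `g`. -/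
def PPair.s {p : ℕ} {G : Type} [Group G] (a : PPair p G) : WeylGroup a.P :=
  QuotientGroup.mk (⟨a.g, a.mem⟩ : ↥(Subgroup.normalizer (a.P : Set G)))

end CorePair

noncomputable section CorePPAlg

/-- An interface for the split semisimple commutative `K`-algebra `K ⊗_ℤ pp_k(Γ)`. -/
structure PPermAlgebra (k K Γ : Type) [Field k] [Field K] [Group Γ] (p : ℕ) : Type 2 where
  A : Type 1
  [ring : CommRing A]
  [alg : Algebra K A]
  cls : PPermClass k Γ p → A
  cls_congr : ∀ M N, EquivRep M.ρ N.ρ → cls M = cls N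
  cls_add : ∀ M N R, EquivRep R.ρ (prodRep M.ρ N.ρ) → cls R = cls M + cls N
  cls_mul : ∀ M N R, EquivRep R.ρ (M.ρ.tprod N.ρ) → cls R = cls M * cls N
  cls_one : ∀ R, EquivRep R.ρ (Representation.trivial k (G := Γ) (V := k)) → cls R = 1
  spanK : Submodule.span K (Set.range cls) = ⊤
  univK : ∀ (B : Type 1) [AddCommGroup B] [Module K B] (f : PPermClass k Γ p → B),
      (∀ M N R, EquivRep R.ρ (prodRep M.ρ N.ρ) → f R = f M + f N) →
      ∃! φ : A →ₗ[K] B, ∀ M, φ (cls M) = f M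

attribute [instance] PPermAlgebra.ring PPermAlgebra.alg

end CorePPAlg

noncomputable section CoreCharRep

/-- The one-dimensional representation attached to a character `χ : Γ → kˣ`. -/
def charRep {k : Type} [Field k] {Γ : Type} [Group Γ] (χ : Γ →* kˣ) :
    Representation k Γ k where
  toFun g := (χ g : k) • LinearMap.id
  map_one' := by
    simp only [map_one, Units.val_one, one_smul]
    rfl
  map_mul' g h := by
    ext
    simp [Units.val_mul, mul_smul, mul_comm]

end CoreCharRep

/-- let `G` be a cyclic group of order `n` prime to `p`. For `t ∈ G`,
the primitive idempotent `F^G_{1,t}` of `K ⊗_ℤ pp_k(G)` is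
`F^G_{1,t} = (1/n) Σ_{φ ∈ Hom(G,kˣ)} φ̃(t⁻¹) [k_φ]`, where `k_φ` is the
one-dimensional `kG`-module with `G` acting via `φ` and `φ̃` its Brauer character. -/
theorem idempotent_cyclic_p'_group
    {k K : Type} [Field k] [IsAlgClosed k] [Field K] [CharZero K]
    {G : Type} [CommGroup G] [IsCyclic G] [Fintype G]
    (p : ℕ) [Fact p.Prime] [CharP k p]
    (hn : ¬ p ∣ Fintype.card G)
    (θ : k →* K) (hθ : Set.InjOn θ {x : k | x ≠ 0})
    (A : PPermAlgebra k K G p)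
    -- `b φ` is the class of the one-dimensional module `k_φ`
    (b : (G →* kˣ) → A.A)
    (hb : ∀ (φ : G →* kˣ) (M : PPermClass k G p),
      EquivRep M.ρ (charRep φ) → b φ = A.cls M)
    -- the species `τ^G_{1,u}`; on `k_φ` it takes the Brauer character value `θ(φ(u))`
    (τ : G → (A.A →ₐ[K] K))
    (hτ : ∀ (u : G) (φ : G →* kˣ), τ u (b φ) = θ ↑(φ u))
    (sep : ∀ x y : A.A, (∀ u, τ u x = τ u y) → x = y)
    -- the primitive idempotents `F^G_{1,t}`, characterized by their species values
    (F : G → A.A)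
    (hF : ∀ u t : G, (u = t → τ u (F t) = 1) ∧ (u ≠ t → τ u (F t) = 0))
    (t : G) :
    F t = ((Fintype.card G : K))⁻¹ •
      ∑ᶠ φ : G →* kˣ, θ ↑(φ t⁻¹) • b φ := by
  classical
  have hexp : Monoid.exponent G = Fintype.card G := by rw [IsCyclic.exponent_eq_card, Nat.card_eq_fintype_card]
  haveI hnz : NeZero ((Monoid.exponent G : k)) := by
    refine ⟨fun h => hn ?_⟩
    rw [hexp] at h
    exact (CharP.cast_eq_zero_iff k p _).mp h
  obtain ⟨e⟩ := CommGroup.monoidHom_mulEquiv_of_hasEnoughRootsOfUnity G k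
  haveI : Finite (G →* kˣ) := Finite.of_equiv G e.symm.toEquiv
  haveI : Fintype (G →* kˣ) := Fintype.ofFinite _
  have hcard : (Fintype.card (G →* kˣ)) = Fintype.card G := Fintype.card_congr e.toEquiv
  -- orthogonality
  have key : ∀ s : G, (∑ φ : G →* kˣ, θ ↑(φ s))
      = if s = 1 then (Fintype.card G : K) else 0 := by
    intro s
    by_cases hs : s = 1
    · simp [hs, hcard]
    · obtain ⟨φ₀, hφ₀⟩ := CommGroup.exists_apply_ne_one_of_hasEnoughRootsOfUnity G k hs
      have hne : θ ↑(φ₀ s) ≠ 1 := by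
        intro h
        apply hφ₀
        have h1 : θ ↑(φ₀ s) = θ (1 : k) := by simpa using h
        have := hθ (Units.ne_zero _ : ((φ₀ s : kˣ) : k) ∈ {x : k | x ≠ 0})
          (one_ne_zero : (1 : k) ∈ {x : k | x ≠ 0}) h1
        exact Units.ext (by simpa using this)
      have h2 : θ ↑(φ₀ s) * (∑ φ : G →* kˣ, θ ↑(φ s)) = ∑ φ : G →* kˣ, θ ↑(φ s) := by
        rw [Finset.mul_sum]
        exact Fintype.sum_equiv (Equiv.mulLeft φ₀)
          (fun φ => θ ↑(φ₀ s) * θ ↑(φ s)) (fun φ => θ ↑(φ s))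
          (fun φ => by
            simp only [Equiv.coe_mulLeft, MonoidHom.mul_apply, Units.val_mul, map_mul])
      have h3 : (θ ↑(φ₀ s) - 1) * (∑ φ : G →* kˣ, θ ↑(φ s)) = 0 := by
        rw [sub_mul, one_mul, h2, sub_self]
      rcases mul_eq_zero.mp h3 with h | h
      · exact absurd (sub_eq_zero.mp h) hne
      · simp [hs, h]
  have hne0 : ((Fintype.card G : K)) ≠ 0 := by
    exact_mod_cast Fintype.card_ne_zero
  apply sep
  intro u
  rw [finsum_eq_sum_of_fintype, map_smul, map_sum]
  have hterm : ∀ φ : G →* kˣ, τ u (θ ↑(φ t⁻¹) • b φ) = θ ↑(φ (t⁻¹ * u)) := by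
    intro φ
    rw [map_smul, hτ, smul_eq_mul, ← map_mul, ← Units.val_mul, ← map_mul]
  simp only [hterm, key, smul_eq_mul]
  by_cases hu : u = t
  · rw [if_pos (by simp [hu]), inv_mul_cancel₀ hne0, (hF u t).1 hu]
  · rw [if_neg (by
        intro h
        exact hu (by rwa [inv_mul_eq_one, eq_comm] at h)), mul_zero, (hF u t).2 hu]
end
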